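/- arXiv:1612.00650 — 3 statements merged into one kernel-verified Lean document; each statement's English description precedes it below -/
import Mathlib

section
/- Fix τ ∈ (3,4) and set α = 1/(τ−1) (so that 1/3 < α < 1/2 and 3α > 1). Let L : [1,∞) → (0,∞) be measurable, bounded on every compact subset of [1,∞), and slowly varying, i.e. for every c > 0, L(cx)/L(x) → 1 as x → ∞. Then lim_{K→∞} limsup_{n→∞} (n^α L(n))^{−3} ∑_{i=K+1}^{n} ((n/i)^α L(n/i))^3 = 0. -/
/-!
Applying Egorov's theorem to `log ∘ L ∘ exp` gives the uniform convergence theorem for the slowly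
varying `L`, hence Potter's bound `L x ≤ C (y / x) ^ δ L y` for `1 ≤ x ≤ y` with `y` large.
Taking `x = n / i`, `y = n`, the `i`-th summand is at most `C³ i ^ (3 (δ - α))` times
`(n ^ α L n)³`, uniformly in `n`. For `δ < α - 1/3` these bounds are summable, so the limsup is
dominated by the tail `∑_{i > K}` of a convergent series, which tends to `0`.
-/

open Filter Set MeasureTheory Topology

lemma exists_mem_Icc_notMem_of_volume_add_lt_one {E₁ E₂ : Set ℝ}
    (hE : volume E₁ + volume E₂ < 1) (u : ℝ) :
    ∃ v ∈ Icc (0 : ℝ) 1, v ∉ E₂ ∧ u + v ∉ E₁ := by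
  by_contra! hcover
  have hsub : Icc (0 : ℝ) 1 ⊆ (fun v => u + v) ⁻¹' E₁ ∪ E₂ := fun v hv =>
    (em (v ∈ E₂)).elim Or.inr fun hv₂ => Or.inl (hcover v hv hv₂)
  have := (measure_mono (μ := volume) hsub).trans (measure_union_le _ _)
  rw [Real.volume_Icc, measure_preimage_add] at this
  norm_num at this
  exact this.not_gt hE

lemma exists_volume_le_eventually_abs_add_sub_lt {h : ℝ → ℝ} (hm : Measurable h)
    (hc : ∀ u, Tendsto (fun t => h (t + u) - h t) atTop (𝓝 0))
    {t : ℕ → ℝ} (ht : Tendsto t atTop atTop)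
    {η ε : ℝ} (hη : 0 < η) (hε : 0 < ε) :
    ∃ E, volume E ≤ ENNReal.ofReal η ∧
      ∀ᶠ k in atTop, ∀ x ∈ Icc (0 : ℝ) 2 \ E, |h (t k + x) - h (t k)| < ε := by
  have hmeas : ∀ k, StronglyMeasurable fun x => h (t k + x) - h (t k) := fun k =>
    ((hm.comp (measurable_const.add measurable_id)).sub measurable_const).stronglyMeasurable
  obtain ⟨E, -, -, hEη, hunif⟩ := tendstoUniformlyOn_of_ae_tendsto (μ := volume)
    hmeas stronglyMeasurable_const measurableSet_Icc (by simp)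
    (ae_of_all _ fun x _ => (hc x).comp ht) hη
  refine ⟨E, hEη, ?_⟩
  filter_upwards [Metric.tendstoUniformlyOn_iff.1 hunif ε hε] with k hk x hx
  simpa [Real.dist_eq, abs_sub_comm] using hk x hx

lemma tendsto_add_sub_of_measurable {h : ℝ → ℝ} (hm : Measurable h)
    (hc : ∀ u, Tendsto (fun t => h (t + u) - h t) atTop (𝓝 0))
    {t u : ℕ → ℝ} (ht : Tendsto t atTop atTop) (hu : ∀ k, u k ∈ Icc (0 : ℝ) 1) :
    Tendsto (fun k => h (t k + u k) - h (t k)) atTop (𝓝 0) := by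
  have htu : Tendsto (fun k => t k + u k) atTop atTop :=
    tendsto_atTop_mono (fun k => le_add_of_nonneg_right (hu k).1) ht
  rw [Metric.tendsto_nhds]
  intro ε hε
  obtain ⟨E₁, hE₁, hk₁⟩ := exists_volume_le_eventually_abs_add_sub_lt hm hc ht
    (η := 1 / 3) (by norm_num) (half_pos hε)
  obtain ⟨E₂, hE₂, hk₂⟩ := exists_volume_le_eventually_abs_add_sub_lt hm hc htu
    (η := 1 / 3) (by norm_num) (half_pos hε)
  have hE : volume E₁ + volume E₂ < 1 := by
    refine (add_le_add hE₁ hE₂).trans_lt ?_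
    rw [← ENNReal.ofReal_add (by norm_num) (by norm_num)]
    exact ENNReal.ofReal_lt_one.2 (by norm_num)
  filter_upwards [hk₁, hk₂] with k hk₁ hk₂
  -- the exceptional sets are too small to exclude every `v`; both differences are small at such `v`
  obtain ⟨v, hv, hv₂, hv₁⟩ := exists_mem_Icc_notMem_of_volume_add_lt_one hE (u k)
  have hv₁' := hk₁ (u k + v) ⟨⟨by linarith [(hu k).1, hv.1], by linarith [(hu k).2, hv.2]⟩, hv₁⟩
  have hv₂' := hk₂ v ⟨⟨hv.1, by linarith [hv.2]⟩, hv₂⟩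
  rw [← add_assoc] at hv₁'
  rw [abs_lt] at hv₁' hv₂'
  rw [Real.dist_eq, sub_zero, abs_lt]
  constructor <;> linarith

theorem tendstoUniformlyOn_add_sub_of_measurable {h : ℝ → ℝ} (hm : Measurable h)
    (hc : ∀ u, Tendsto (fun t => h (t + u) - h t) atTop (𝓝 0)) :
    TendstoUniformlyOn (fun t u => h (t + u) - h t) 0 atTop (Icc 0 1) := by
  rw [Metric.tendstoUniformlyOn_iff]
  intro ε hε
  by_contra hbad
  have hseq : ∀ k : ℕ, ∃ t : ℝ, (k : ℝ) ≤ t ∧ ∃ u ∈ Icc (0 : ℝ) 1, ε ≤ |h (t + u) - h t| := by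
    intro k
    obtain ⟨t, hkt, ht⟩ := frequently_atTop.1 (not_eventually.1 hbad) k
    push Not at ht
    obtain ⟨u, hu, hεu⟩ := ht
    exact ⟨t, hkt, u, hu, by simpa [Real.dist_eq, abs_sub_comm] using hεu⟩
  choose t ht u hu hεu using hseq
  obtain ⟨k, hk⟩ := (Metric.tendsto_nhds.1 (tendsto_add_sub_of_measurable hm hc
    (tendsto_atTop_mono ht tendsto_natCast_atTop_atTop) hu) ε hε).exists
  rw [Real.dist_eq, sub_zero] at hk
  exact (hεu k).not_gt hk

lemma abs_add_sub_le_mul_add_one {g : ℝ → ℝ} {T δ : ℝ}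
    (hg : ∀ t, T ≤ t → ∀ u ∈ Icc (0 : ℝ) 1, |g (t + u) - g t| ≤ δ)
    {t : ℝ} (ht : T ≤ t) {s : ℝ} (hs : 0 ≤ s) :
    |g (t + s) - g t| ≤ δ * (s + 1) := by
  have hδ : 0 ≤ δ := by simpa using hg t ht 0 (by simp)
  have hstep : ∀ n : ℕ, ∀ s : ℝ, 0 ≤ s → s ≤ n + 1 → |g (t + s) - g t| ≤ δ * (n + 1) := by
    intro n
    induction n with
    | zero => intro s hs0 hs1; simpa using hg t ht s ⟨hs0, by simpa using hs1⟩
    | succ n ih =>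
      intro s hs0 hs1
      push_cast at hs1 ⊢
      rcases le_or_gt s (n + 1) with hsn | hsn
      · nlinarith [ih s hs0 hsn]
      · have hprev := ih (s - 1) (by linarith [n.cast_nonneg (α := ℝ)]) (by linarith)
        have hlast := hg (t + (s - 1)) (by linarith) 1 (by simp)
        rw [show t + (s - 1) + 1 = t + s by ring] at hlast
        calc |g (t + s) - g t|
            ≤ |g (t + s) - g (t + (s - 1))| + |g (t + (s - 1)) - g t| := abs_sub_le _ _ _
          _ ≤ δ * (n + 1 + 1) := by linarith
  calc |g (t + s) - g t| ≤ δ * (⌊s⌋₊ + 1) := hstep _ s hs (Nat.lt_floor_add_one s).le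
    _ ≤ δ * (s + 1) := by gcongr; exact Nat.floor_le hs

def IsSlowlyVarying (L : ℝ → ℝ) : Prop :=
  ∀ c : ℝ, 0 < c → Tendsto (fun x => L (c * x) / L x) atTop (𝓝 1)

namespace IsSlowlyVarying

variable {L : ℝ → ℝ}

lemma tendsto_log_comp_exp_add_sub (hL : IsSlowlyVarying L) (hLpos : ∀ x, 1 ≤ x → 0 < L x)
    (u : ℝ) :
    Tendsto (fun s => Real.log (L (Real.exp (s + u))) - Real.log (L (Real.exp s))) atTop
      (𝓝 0) := by
  have hlim := ((Real.continuousAt_log one_ne_zero).tendsto.comp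
    ((hL _ (Real.exp_pos u)).comp Real.tendsto_exp_atTop))
  rw [Real.log_one] at hlim
  refine hlim.congr' ?_
  filter_upwards [eventually_ge_atTop 0, eventually_ge_atTop (-u)] with s hs hsu
  simp only [Function.comp_apply, ← Real.exp_add, add_comm u s]
  exact Real.log_div (hLpos _ (Real.one_le_exp (by linarith))).ne'
    (hLpos _ (Real.one_le_exp hs)).ne'

lemma eventually_potter_bound (hL : IsSlowlyVarying L) (hLpos : ∀ x, 1 ≤ x → 0 < L x)
    (hLmeas : Measurable L) {δ : ℝ} (hδ : 0 < δ) :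
    ∃ X, 1 ≤ X ∧ ∀ x y, X ≤ x → x ≤ y → L x ≤ Real.exp δ * (y / x) ^ δ * L y := by
  set g : ℝ → ℝ := fun s => Real.log (L (Real.exp s))
  have hunif := Metric.tendstoUniformlyOn_iff.1 (tendstoUniformlyOn_add_sub_of_measurable
    (Real.measurable_log.comp (hLmeas.comp Real.measurable_exp))
    (hL.tendsto_log_comp_exp_add_sub hLpos)) δ hδ
  obtain ⟨T, hT⟩ := eventually_atTop.1 hunif
  have hg : ∀ t, T ≤ t → ∀ u ∈ Icc (0 : ℝ) 1, |g (t + u) - g t| ≤ δ := fun t ht u hu => by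
    simpa [Real.dist_eq, abs_sub_comm] using (hT t ht u hu).le
  refine ⟨max 1 (Real.exp T), le_max_left _ _, fun x y hx hxy => ?_⟩
  have hx1 : 1 ≤ x := (le_max_left _ _).trans hx
  have hx0 : 0 < x := zero_lt_one.trans_le hx1
  have hy0 : 0 < y := hx0.trans_le hxy
  have hTx : T ≤ Real.log x := (Real.le_log_iff_exp_le hx0).2 ((le_max_right _ _).trans hx)
  have hlog := abs_add_sub_le_mul_add_one hg hTx
    (sub_nonneg.2 (Real.log_le_log hx0 hxy))
  simp only [g, add_sub_cancel, Real.exp_log hx0, Real.exp_log hy0] at hlog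
  have hlogL : Real.log (L x) ≤ δ + δ * Real.log (y / x) + Real.log (L y) := by
    rw [Real.log_div hy0.ne' hx0.ne']
    linarith [(abs_le.1 hlog).1]
  calc L x = Real.exp (Real.log (L x)) := (Real.exp_log (hLpos x hx1)).symm
    _ ≤ Real.exp (δ + δ * Real.log (y / x) + Real.log (L y)) := Real.exp_le_exp.2 hlogL
    _ = Real.exp δ * (y / x) ^ δ * L y := by
      rw [Real.exp_add, Real.exp_add, Real.exp_log (hLpos y (hx1.trans hxy)),
        Real.rpow_def_of_pos (div_pos hy0 hx0), mul_comm δ]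

lemma potter_bound (hL : IsSlowlyVarying L) (hLpos : ∀ x, 1 ≤ x → 0 < L x)
    (hLmeas : Measurable L)
    (hLbdd : ∀ K : Set ℝ, IsCompact K → K ⊆ Ici 1 → ∃ M : ℝ, ∀ x ∈ K, L x ≤ M)
    {δ : ℝ} (hδ : 0 < δ) :
    ∃ C X, 0 < C ∧ 1 ≤ X ∧
      ∀ x y, 1 ≤ x → x ≤ y → X ≤ y → L x ≤ C * (y / x) ^ δ * L y := by
  obtain ⟨X, hX, hP⟩ := hL.eventually_potter_bound hLpos hLmeas hδ
  obtain ⟨M, hM⟩ := hLbdd (Icc 1 X) isCompact_Icc fun x hx => hx.1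
  have hLX := hLpos X hX
  refine ⟨max (Real.exp δ) (M * Real.exp δ / L X), X, (Real.exp_pos δ).trans_le (le_max_left _ _),
    hX, fun x y hx hxy hXy => ?_⟩
  have hy : 1 ≤ y := hx.trans hxy
  have hLy := (hLpos y hy).le
  rcases le_total X x with hXx | hxX
  · calc L x ≤ Real.exp δ * (y / x) ^ δ * L y := hP x y hXx hxy
      _ ≤ _ := by rw [mul_assoc, mul_assoc]; gcongr; exact le_max_left _ _
  -- below `X`, compare `L x ≤ M` with the Potter bound between `X` and `y`
  have hXy' : L X ≤ Real.exp δ * (y / x) ^ δ * L y := by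
    refine (hP X y le_rfl hXy).trans ?_
    rw [mul_assoc, mul_assoc]
    gcongr
  calc L x ≤ M := hM x ⟨hx, hxX⟩
    _ ≤ M / L X * (Real.exp δ * (y / x) ^ δ * L y) := by
      rw [div_mul_eq_mul_div, le_div_iff₀ hLX]
      exact mul_le_mul_of_nonneg_left hXy' ((hLpos x hx).le.trans (hM x ⟨hx, hxX⟩))
    _ = M * Real.exp δ / L X * ((y / x) ^ δ * L y) := by ring
    _ ≤ _ := by rw [mul_assoc]; gcongr; exact le_max_right _ _

end IsSlowlyVarying

lemma rpow_mul_le_of_potter_bound {L : ℝ → ℝ} {C X δ α : ℝ}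
    (hP : ∀ x y, 1 ≤ x → x ≤ y → X ≤ y → L x ≤ C * (y / x) ^ δ * L y)
    {y i : ℝ} (hi : 1 ≤ i) (hiy : i ≤ y) (hXy : X ≤ y) :
    (y / i) ^ α * L (y / i) ≤ C * i ^ (δ - α) * (y ^ α * L y) := by
  have hi0 : 0 < i := zero_lt_one.trans_le hi
  have hy0 : 0 < y := hi0.trans_le hiy
  have hL := hP (y / i) y ((one_le_div hi0).2 hiy) (div_le_self hy0.le hi) hXy
  rw [div_div_cancel₀ hy0.ne'] at hL
  calc (y / i) ^ α * L (y / i) ≤ (y / i) ^ α * (C * i ^ δ * L y) := by gcongr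
    _ = C * i ^ (δ - α) * (y ^ α * L y) := by
      rw [Real.div_rpow hy0.le hi0.le, Real.rpow_sub hi0]
      field_simp

lemma sum_Ioc_le_tsum_nat_add {f : ℕ → ℝ} (hf : Summable f) (hf0 : ∀ i, 0 ≤ f i) (K n : ℕ) :
    ∑ i ∈ Finset.Ioc K n, f i ≤ ∑' k, f (k + (K + 1)) := by
  rw [← Finset.Ico_add_one_add_one_eq_Ioc, Finset.sum_Ico_eq_sum_range]
  simp_rw [add_comm (K + 1)]
  exact ((summable_nat_add_iff (K + 1)).2 hf).sum_le_tsum _ fun i _ => hf0 _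

lemma limsup_mem_Icc_of_eventually_mem {ι : Type*} {l : Filter ι} [l.NeBot] {u : ι → ℝ}
    {a b : ℝ} (h : ∀ᶠ n in l, u n ∈ Icc a b) : limsup u l ∈ Icc a b :=
  ⟨le_limsup_of_frequently_le (h.mono fun _ hn => hn.1).frequently
      (isBoundedUnder_of_eventually_le (h.mono fun _ hn => hn.2)),
    limsup_le_of_le (isCoboundedUnder_le_of_eventually_le l (h.mono fun _ hn => hn.1))
      (h.mono fun _ hn => hn.2)⟩

lemma sum_rpow_mul_pow_three_div_mem_Icc {L : ℝ → ℝ} {C X δ α : ℝ}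
    (hLpos : ∀ x, 1 ≤ x → 0 < L x)
    (hP : ∀ x y, 1 ≤ x → x ≤ y → X ≤ y → L x ≤ C * (y / x) ^ δ * L y)
    (hX : 1 ≤ X) (K n : ℕ) (hn : X ≤ n) :
    (∑ i ∈ Finset.Ioc K n, (((n : ℝ) / i) ^ α * L ((n : ℝ) / i)) ^ 3) / ((n : ℝ) ^ α * L n) ^ 3
      ∈ Icc 0 (C ^ 3 * ∑ i ∈ Finset.Ioc K n, (i : ℝ) ^ ((δ - α) * 3)) := by
  have hn1 : 1 ≤ (n : ℝ) := hX.trans hn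
  have hden : 0 < ((n : ℝ) ^ α * L n) ^ 3 := by have := hLpos n hn1; positivity
  have hi : ∀ i ∈ Finset.Ioc K n, 1 ≤ (i : ℝ) ∧ (i : ℝ) ≤ n := fun i hi => by
    obtain ⟨hKi, hin⟩ := Finset.mem_Ioc.1 hi
    exact ⟨Nat.one_le_cast.2 (K.zero_le.trans_lt hKi), Nat.cast_le.2 hin⟩
  rw [mem_Icc, le_div_iff₀ hden, div_le_iff₀ hden, zero_mul, Finset.mul_sum, Finset.sum_mul]
  constructor
  · refine Finset.sum_nonneg fun i hi' => ?_
    have := hLpos _ ((one_le_div (zero_lt_one.trans_le (hi i hi').1)).2 (hi i hi').2)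
    positivity
  · refine Finset.sum_le_sum fun i hi' => ?_
    obtain ⟨hi1, hin⟩ := hi i hi'
    have hL := hLpos _ ((one_le_div (zero_lt_one.trans_le hi1)).2 hin)
    calc (((n : ℝ) / i) ^ α * L ((n : ℝ) / i)) ^ 3
        ≤ (C * (i : ℝ) ^ (δ - α) * ((n : ℝ) ^ α * L n)) ^ 3 :=
          pow_le_pow_left₀ (by positivity) (rpow_mul_le_of_potter_bound hP hi1 hin hn) 3
      _ = C ^ 3 * (i : ℝ) ^ ((δ - α) * 3) * ((n : ℝ) ^ α * L n) ^ 3 := by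
          rw [mul_pow, mul_pow, ← Real.rpow_mul_natCast (Nat.cast_nonneg i)]
          norm_num

/-- **Third-moment tail estimate for power-law degrees.**
Fix `τ ∈ (3,4)` and `α = 1/(τ−1)`. Let `L : [1,∞) → (0,∞)` be measurable, bounded on compact
subsets of `[1,∞)`, and slowly varying. Then
`lim_{K→∞} limsup_{n→∞} (n^α L(n))^{−3} ∑_{i=K+1}^n ((n/i)^α L(n/i))^3 = 0`. -/
theorem third_moment_tail_slowly_varying
    (τ : ℝ) (hτ : τ ∈ Set.Ioo (3 : ℝ) 4) (α : ℝ) (hα : α = 1 / (τ - 1))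
    (L : ℝ → ℝ)
    (hLpos : ∀ x : ℝ, 1 ≤ x → 0 < L x)
    (hLmeas : Measurable L)
    (hLbdd : ∀ K : Set ℝ, IsCompact K → K ⊆ Set.Ici (1 : ℝ) → ∃ M : ℝ, ∀ x ∈ K, L x ≤ M)
    (hLslow : ∀ c : ℝ, 0 < c →
      Tendsto (fun x : ℝ => L (c * x) / L x) atTop (nhds 1)) :
    Tendsto (fun K : ℕ =>
      Filter.limsup (fun n : ℕ =>
        (∑ i ∈ Finset.Ioc K n, (((n : ℝ) / (i : ℝ)) ^ α * L ((n : ℝ) / (i : ℝ))) ^ 3)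
          / ((n : ℝ) ^ α * L (n : ℝ)) ^ 3) atTop)
      atTop (nhds 0) := by
  have h3α : 1 < 3 * α := by
    rw [hα, mul_one_div, lt_div_iff₀ (by linarith [hτ.1])]
    linarith [hτ.2]
  -- any `δ ∈ (0, α - 1/3)` makes `∑ i ^ (3 (δ - α))` converge
  set δ := (3 * α - 1) / 6 with hδ
  have hsum : Summable fun i : ℕ => (i : ℝ) ^ ((δ - α) * 3) :=
    Real.summable_nat_rpow.2 (by linarith)
  obtain ⟨C, X, hC, hX, hP⟩ :=
    IsSlowlyVarying.potter_bound hLslow hLpos hLmeas hLbdd (δ := δ) (by linarith)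
  have hbound : ∀ K : ℕ, limsup (fun n : ℕ =>
      (∑ i ∈ Finset.Ioc K n, (((n : ℝ) / i) ^ α * L ((n : ℝ) / i)) ^ 3)
        / ((n : ℝ) ^ α * L n) ^ 3) atTop
      ∈ Icc 0 (C ^ 3 * ∑' k : ℕ, ((k + (K + 1) : ℕ) : ℝ) ^ ((δ - α) * 3)) := fun K => by
    refine limsup_mem_Icc_of_eventually_mem ?_
    filter_upwards [eventually_ge_atTop ⌈X⌉₊] with n hn
    have hmem := sum_rpow_mul_pow_three_div_mem_Icc (α := α) hLpos hP hX K n (Nat.ceil_le.1 hn)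
    have htail := sum_Ioc_le_tsum_nat_add hsum (fun i => Real.rpow_nonneg i.cast_nonneg _) K n
    exact ⟨hmem.1, hmem.2.trans (by gcongr)⟩
  have htail := ((tendsto_sum_nat_add fun i : ℕ => (i : ℝ) ^ ((δ - α) * 3)).comp
    (tendsto_add_atTop_nat 1)).const_mul (C ^ 3)
  rw [mul_zero] at htail
  exact tendsto_of_tendsto_of_tendsto_of_le_of_le tendsto_const_nhds htail
    (fun K => (hbound K).1) (fun K => (hbound K).2)
end

section
/- Let T > 0 and let f ∈ D_+[0,T] be good. Then f is continuous at every excursion right-endpoint: for every r ∈ Y(f) one has f(r−) = f(r). -/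
open MeasureTheory Set Filter

/-- The running minimum `f̲(x) = inf_{0 ≤ y ≤ x} f(y)`. -/
noncomputable def pastMin (f : ℝ → ℝ) (x : ℝ) : ℝ := sInf (f '' Set.Icc 0 x)

/-- Membership in `D₊[0,T]`: `f` is right-continuous on `[0,T)`, has a left limit at every
point of `(0,T]` recorded by the function `fl` (with the convention `fl 0 = f 0`), and has
only positive jumps on `[0,T]`. -/
def MemDplus (f fl : ℝ → ℝ) (T : ℝ) : Prop :=
  (∀ x ∈ Set.Ico (0 : ℝ) T, ContinuousWithinAt f (Set.Icc x T) x) ∧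
  (∀ x ∈ Set.Ioc (0 : ℝ) T, Tendsto f (nhdsWithin x (Set.Ico 0 x)) (nhds (fl x))) ∧
  fl 0 = f 0 ∧
  (∀ x ∈ Set.Icc (0 : ℝ) T, fl x ≤ f x)

/-- `(l,r) ⊆ [0,T]` is an excursion of `f` (with left-limit function `fl`):
`min{f(l−),f(l)} = f̲(l) = f̲(r) = min{f(r−),f(r)}` and `f(x) > f̲(r)` for all `x ∈ (l,r)`. -/
def IsExcursion (f fl : ℝ → ℝ) (T l r : ℝ) : Prop :=
  0 ≤ l ∧ l < r ∧ r ≤ T ∧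
  min (fl l) (f l) = pastMin f l ∧
  pastMin f l = pastMin f r ∧
  pastMin f r = min (fl r) (f r) ∧
  ∀ x ∈ Set.Ioo l r, pastMin f r < f x

/-- `Y(f)`: the set of right endpoints of excursions of `f`. -/
def excursionEnds (f fl : ℝ → ℝ) (T : ℝ) : Set ℝ := {r | ∃ l, IsExcursion f fl T l r}

/-- `f` is good: (a) `Y(f)` has no isolated points and the complement in `[0,T]` of the union
of all excursion intervals has Lebesgue measure zero; (b) `f` does not attain a local minimum
at any point of `Y(f)`. -/
def GoodFun (f fl : ℝ → ℝ) (T : ℝ) : Prop :=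
  (∀ r ∈ excursionEnds f fl T, ∀ ε > 0,
      ∃ r' ∈ excursionEnds f fl T, r' ≠ r ∧ |r' - r| < ε) ∧
  volume (Set.Icc 0 T \ ⋃ (l : ℝ) (r : ℝ) (_ : IsExcursion f fl T l r), Set.Ioo l r) = 0 ∧
  (∀ r ∈ excursionEnds f fl T, ∀ δ > 0, ∃ x ∈ Set.Icc (0 : ℝ) T, |x - r| < δ ∧ f x < f r)

/-! Suppose `f` jumps at the right end `r` of an excursion `(l, r)`. Then `f > f̲` at every point
of `(l, r]`. Right-continuity at such a point `y` keeps `f` above some `c > f̲(y)` just to the right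
of `y`, so for `x` there `min {f(x−), f(x)} ≥ c > f̲(y) = f̲(x)`: no excursion ends right after `y`.
Hence the infimum of `Y(f) ∩ (a, r]`, for any `a ∈ (l, r)`, is attained, and it is an isolated
point of `Y(f)`. -/

open Topology

theorem exists_isolated_of_eventually_notMem_nhdsGT {S : Set ℝ} {a b : ℝ} (hab : a < b)
    (hb : b ∈ S) (hgap : ∀ y ∈ Icc a b, ∀ᶠ x in 𝓝[>] y, x ∉ S) :
    ∃ y ∈ S, ∃ ε > 0, ∀ y' ∈ S, y' ≠ y → ε ≤ |y' - y| := by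
  set s := S ∩ Ioc a b
  have hs : s.Nonempty := ⟨b, hb, hab, le_rfl⟩
  have hbdd : BddBelow s := ⟨a, fun x hx => hx.2.1.le⟩
  have hz : sInf s ∈ Icc a b := ⟨le_csInf hs fun x hx => hx.2.1.le, csInf_le hbdd ⟨hb, hab, le_rfl⟩⟩
  obtain ⟨u, hzu, hu⟩ := mem_nhdsGT_iff_exists_Ioo_subset.mp (hgap _ hz)
  obtain ⟨y, hys, hyu⟩ := exists_lt_of_csInf_lt hs hzu
  have hyz : y = sInf s :=
    le_antisymm (not_lt.mp fun h => hu ⟨h, hyu⟩ hys.1) (csInf_le hbdd hys)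
  refine ⟨y, hys.1, min (u - y) (y - a), lt_min (by linarith) (by linarith [hys.2.1]), ?_⟩
  intro y' hy' hne
  by_contra! hlt
  obtain ⟨hlo, hhi⟩ := abs_lt.mp hlt
  have hεu := min_le_left (u - y) (y - a)
  have hεa := min_le_right (u - y) (y - a)
  rcases hne.lt_or_gt with h | h
  · have hzy' : sInf s ≤ y' := csInf_le hbdd ⟨hy', by linarith, by linarith [hys.2.2]⟩
    linarith
  · exact hu ⟨hyz ▸ h, by linarith⟩ hy'

theorem pastMin_eq_of_forall_Ioc_le {f : ℝ → ℝ} {x y : ℝ} (hy : 0 ≤ y) (hyx : y ≤ x)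
    (h : ∀ z ∈ Ioc y x, pastMin f y ≤ f z) : pastMin f x = pastMin f y := by
  have hsplit : f '' Icc 0 x = f '' Icc 0 y ∪ f '' Ioc y x := by
    rw [← image_union, Icc_union_Ioc_eq_Icc hy hyx]
  have hne : (f '' Icc 0 y).Nonempty := (nonempty_Icc.mpr hy).image f
  by_cases hbdd : BddBelow (f '' Icc 0 y)
  · have hbdd' : BddBelow (f '' Icc 0 x) := by
      rw [hsplit]
      exact hbdd.union ⟨pastMin f y, forall_mem_image.mpr h⟩
    refine le_antisymm (csInf_le_csInf hbdd' hne (hsplit ▸ subset_union_left)) ?_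
    refine le_csInf (hsplit ▸ hne.mono subset_union_left) ?_
    rw [hsplit]
    rintro _ (hz | ⟨z, hz, rfl⟩)
    · exact csInf_le hbdd hz
    · exact h z hz
  · have hbdd' : ¬BddBelow (f '' Icc 0 x) := fun h' =>
      hbdd (h'.mono (hsplit ▸ subset_union_left))
    simp only [pastMin, Real.sInf_of_not_bddBelow hbdd, Real.sInf_of_not_bddBelow hbdd']

theorem IsExcursion.pastMin_lt_of_mem_Ioo {f fl : ℝ → ℝ} {T l r y : ℝ}
    (h : IsExcursion f fl T l r) (hy : y ∈ Ioo l r) : pastMin f y < f y := by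
  obtain ⟨hl, -, -, -, hlr_min, -, hint⟩ := h
  have hy_min : pastMin f y = pastMin f l := pastMin_eq_of_forall_Ioc_le hl hy.1.le
    fun z hz => (hlr_min ▸ hint z ⟨hz.1, hz.2.trans_lt hy.2⟩).le
  exact hy_min ▸ hlr_min ▸ hint y hy

theorem eventually_nhdsGT_notMem_excursionEnds {f fl : ℝ → ℝ} {T y : ℝ}
    (hf : MemDplus f fl T) (hy : 0 ≤ y) (hfy : pastMin f y < f y) :
    ∀ᶠ x in 𝓝[>] y, x ∉ excursionEnds f fl T := by
  rcases lt_or_ge y T with hyT | hTy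
  swap
  · refine eventually_nhdsWithin_of_forall fun x hx ⟨l, hex⟩ => ?_
    exact (hTy.trans_lt hx).not_ge hex.2.2.1
  obtain ⟨c, hmc, hcf⟩ := exists_between hfy
  have hright : ∀ᶠ x in 𝓝[≥] y, c < f x := by
    rw [← nhdsWithin_Icc_eq_nhdsGE hyT]
    exact hf.1 y ⟨hy, hyT⟩ (Ioi_mem_nhds hcf)
  obtain ⟨u, hyu, hu⟩ := mem_nhdsGE_iff_exists_Ico_subset.mp hright
  filter_upwards [Ioo_mem_nhdsGT hyu] with x hx ⟨l, hex⟩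
  obtain ⟨-, -, hxT, -, -, hmin, -⟩ := hex
  have hx0 : 0 < x := hy.trans_lt hx.1
  have hleft : c ≤ fl x := by
    have hlim := hf.2.1 x ⟨hx0, hxT⟩
    rw [nhdsWithin_Ico_eq_nhdsLT hx0] at hlim
    refine ge_of_tendsto hlim ?_
    filter_upwards [Ioo_mem_nhdsLT hx.1] with z hz
    exact (hu ⟨hz.1.le, hz.2.trans hx.2⟩).le
  have hconst : pastMin f x = pastMin f y := pastMin_eq_of_forall_Ioc_le hy hx.1.le
    fun z hz => hmc.trans (hu ⟨hz.1.le, hz.2.trans_lt hx.2⟩) |>.le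
  have hcx : c ≤ min (fl x) (f x) := le_min hleft (hu ⟨hx.1.le, hx.2⟩).le
  linarith

theorem good_continuous_at_excursion_ends_general
    (T : ℝ)
    (f fl : ℝ → ℝ) (hf : MemDplus f fl T) (hgood : GoodFun f fl T) :
    ∀ r ∈ excursionEnds f fl T, fl r = f r := by
  intro r hr
  obtain ⟨l, hexc⟩ := id hr
  obtain ⟨hl, hlr, hrT, -, -, hr_min, -⟩ := id hexc
  by_contra hne
  have hjump : fl r < f r := (hf.2.2.2 r ⟨hl.trans hlr.le, hrT⟩).lt_of_ne hne
  have hgap : ∀ y ∈ Icc ((l + r) / 2) r, pastMin f y < f y := by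
    rintro y ⟨hly, hyr⟩
    rcases hyr.lt_or_eq with hyr | rfl
    · exact hexc.pastMin_lt_of_mem_Ioo ⟨by linarith, hyr⟩
    · rwa [hr_min, min_eq_left hjump.le]
  obtain ⟨y, hy, ε, hε, hiso⟩ := exists_isolated_of_eventually_notMem_nhdsGT (by linarith) hr
    fun y hy => eventually_nhdsGT_notMem_excursionEnds hf (by linarith [hy.1]) (hgap y hy)
  obtain ⟨y', hy', hne', hclose⟩ := hgood.1 y hy ε hε
  exact (hiso y' hy' hne').not_gt hclose

/-- **Good functions are continuous at excursion endpoints (Remark 5.1 of the paper).**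
If `f ∈ D₊[0,T]` is good, then for every excursion right-endpoint `r ∈ Y(f)` one has
`f(r−) = f(r)`. -/
theorem good_continuous_at_excursion_ends
    (T : ℝ) (hT : 0 < T)
    (f fl : ℝ → ℝ) (hf : MemDplus f fl T) (hgood : GoodFun f fl T) :
    ∀ r ∈ excursionEnds f fl T, fl r = f r :=
  good_continuous_at_excursion_ends_general T f fl hf hgood
end

section
/- Let n be a positive integer, d_1, …, d_n nonnegative integers, p ∈ [0,1], and let (I_{ij})_{i ∈ [n], j ∈ [d_i]} be independent Bernoulli(√p) random variables. Set d̃_i := ∑_{j=1}^{d_i} I_{ij} and f := ∑_{i=1}^{n} d̃_i (d̃_i − 1). Then E[f] = p ∑_{i=1}^{n} d_i(d_i − 1), and for every t > 0, P( | f − p ∑_{i=1}^{n} d_i(d_i − 1) | > t ) ≤ 2 exp( − t^2 / ( 2 ∑_{i=1}^{n} d_i (d_i + 1)^2 ) ). -/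
/-!
Read the half-edge indicators as a point of the Boolean cube `{0,1}^(Σ i, Fin dᵢ)`: by
independence its law is the product of Bernoulli(`√p`) weights, so expectations become weighted
cube averages. Since `I² = I`, `d̃ᵢ(d̃ᵢ - 1)` is the sum of `I_{ij} I_{ij'}` over `j ≠ j'`, each of
mean `p`. Flipping one indicator at vertex `i` moves `f` by at most `2(dᵢ + 1)`; exposing the
coordinates one at a time and applying Hoeffding's lemma to each two-point step (McDiarmid's
argument) makes `f - E f` sub-Gaussian with variance proxy `∑ᵢ dᵢ(dᵢ + 1)²`, and the Chernoff
bound on both tails gives the estimate.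
-/

open MeasureTheory ProbabilityTheory Real
open scoped NNReal

lemma centered_bernoulli_mgf_le (a : unitInterval) (u : ℝ) :
    (1 - a) * exp (-a * u) + a * exp ((1 - a) * u) ≤ exp (u ^ 2 / 8) := by
  set ν : Measure ℝ := Ber(1 - a, -a, a)
  have hmean : ν[id] = 0 := by
    simp only [ν, integral_bernoulliMeasure, id, smul_eq_mul]; ring
  have hrange : ∀ᵐ z ∂ν, id z ∈ Set.Icc (-a : ℝ) (1 - a) := by
    rw [ae_iff]
    exact bernoulliMeasure_apply_of_notMem_of_notMem _ measurableSet_Icc.compl (by simp) (by simp)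
  have hmgf :=
    (hasSubgaussianMGF_of_mem_Icc_of_integral_eq_zero aemeasurable_id hrange hmean).mgf_le u
  simp only [mgf, id, ν, integral_bernoulliMeasure, smul_eq_mul] at hmgf
  norm_num at hmgf
  calc (1 - a) * exp (-a * u) + a * exp ((1 - a) * u)
      = a * exp (u * (1 - a)) + (1 - a) * exp (-(u * a)) := by ring_nf
    _ ≤ _ := hmgf
    _ = _ := by ring_nf

lemma two_point_mgf_le (a : unitInterval) {x₀ x₁ K : ℝ} (h : |x₁ - x₀| ≤ K) (l : ℝ) :
    (1 - a) * exp (l * (x₀ - ((1 - a) * x₀ + a * x₁)))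
      + a * exp (l * (x₁ - ((1 - a) * x₀ + a * x₁))) ≤ exp (l ^ 2 / 8 * K ^ 2) := by
  have h₀ : l * (x₀ - ((1 - a) * x₀ + a * x₁)) = -a * (l * (x₁ - x₀)) := by ring
  have h₁ : l * (x₁ - ((1 - a) * x₀ + a * x₁)) = (1 - a) * (l * (x₁ - x₀)) := by ring
  rw [h₀, h₁]
  refine (centered_bernoulli_mgf_le a _).trans (exp_le_exp.2 ?_)
  have hsq : (x₁ - x₀) ^ 2 ≤ K ^ 2 := sq_le_sq' (abs_le.1 h).1 (abs_le.1 h).2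
  calc (l * (x₁ - x₀)) ^ 2 / 8 = l ^ 2 / 8 * (x₁ - x₀) ^ 2 := by ring
    _ ≤ _ := by gcongr

section BoolCube

variable {ι : Type*} [Fintype ι] (a : unitInterval)

def cubeWeight (c : ι → Bool) : ℝ := ∏ q, if c q then (a : ℝ) else 1 - a

lemma cubeWeight_nonneg (c : ι → Bool) : 0 ≤ cubeWeight a c :=
  Finset.prod_nonneg fun q _ => by
    split
    exacts [unitInterval.nonneg a, unitInterval.one_minus_nonneg a]

variable [DecidableEq ι]

def cubeMean (g : (ι → Bool) → ℝ) : ℝ := ∑ c, cubeWeight a c * g c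

variable {a}

lemma cubeMean_prod_indicator (s : Finset ι) :
    cubeMean a (fun c => ∏ q ∈ s, if c q then 1 else 0) = (a : ℝ) ^ s.card := by
  have hfactor : ∀ c : ι → Bool, cubeWeight a c * ∏ q ∈ s, (if c q then 1 else 0)
      = ∏ q, (if c q then (a : ℝ) else 1 - a) * (if q ∈ s then (if c q then 1 else 0) else 1) := by
    intro c
    rw [cubeWeight, Finset.prod_mul_distrib, Finset.prod_ite_mem, Finset.univ_inter]
  rw [cubeMean, Finset.sum_congr rfl fun c _ => hfactor c, ← Fintype.prod_sum fun q (b : Bool) =>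
    (if b then (a : ℝ) else 1 - a) * (if q ∈ s then (if b then 1 else 0) else 1)]
  have hcoord : ∀ q, ∑ b : Bool, (if b then (a : ℝ) else 1 - a)
      * (if q ∈ s then (if b then 1 else 0) else 1) = if q ∈ s then (a : ℝ) else 1 := by
    intro q
    split_ifs <;> simp
  simp only [hcoord, Finset.prod_ite_mem, Finset.univ_inter, Finset.prod_const]

lemma cubeMean_const_mul (k : ℝ) (g : (ι → Bool) → ℝ) :
    cubeMean a (fun c => k * g c) = k * cubeMean a g := by
  simp only [cubeMean, Finset.mul_sum, mul_left_comm]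

lemma cubeMean_const (k : ℝ) : cubeMean a (fun _ : ι → Bool => k) = k := by
  have h := cubeMean_prod_indicator (a := a) (∅ : Finset ι)
  simp only [Finset.prod_empty, Finset.card_empty, pow_zero] at h
  simpa [h] using cubeMean_const_mul (a := a) k (fun _ : ι → Bool => 1)

lemma cubeMean_sub (g h : (ι → Bool) → ℝ) :
    cubeMean a (fun c => g c - h c) = cubeMean a g - cubeMean a h := by
  simp only [cubeMean, mul_sub, Finset.sum_sub_distrib]

lemma cubeMean_sum {α : Type*} (t : Finset α) (g : α → (ι → Bool) → ℝ) :
    cubeMean a (fun c => ∑ k ∈ t, g k c) = ∑ k ∈ t, cubeMean a (g k) := by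
  simp only [cubeMean, Finset.mul_sum]
  exact Finset.sum_comm

lemma cubeMean_mono {g h : (ι → Bool) → ℝ} (hgh : ∀ c, g c ≤ h c) :
    cubeMean a g ≤ cubeMean a h :=
  Finset.sum_le_sum fun c _ => mul_le_mul_of_nonneg_left (hgh c) (cubeWeight_nonneg a c)

lemma abs_cubeMean_le {g : (ι → Bool) → ℝ} {K : ℝ} (hg : ∀ c, |g c| ≤ K) :
    |cubeMean a g| ≤ K := by
  rw [abs_le]
  constructor
  · simpa [cubeMean_const] using cubeMean_mono (a := a) fun c => (abs_le.1 (hg c)).1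
  · simpa [cubeMean_const] using cubeMean_mono (a := a) fun c => (abs_le.1 (hg c)).2

lemma cubeMean_fin_cons {m : ℕ} (g : (Fin (m + 1) → Bool) → ℝ) :
    cubeMean a g = (1 - a) * cubeMean a (fun c => g (Fin.cons false c))
      + a * cubeMean a (fun c => g (Fin.cons true c)) := by
  rw [cubeMean, ← (Fin.consEquiv fun _ => Bool).sum_comp, Fintype.sum_prod_type, Fintype.sum_bool]
  simp [Fin.consEquiv, cubeMean, cubeWeight, Fin.prod_univ_succ, Finset.mul_sum, mul_assoc,
    add_comm]

lemma cubeMean_eq_of_isEmpty [IsEmpty ι] (g : (ι → Bool) → ℝ) (c : ι → Bool) :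
    cubeMean a g = g c := by
  rw [← cubeMean_const (ι := ι) (a := a) (g c)]
  exact congrArg _ (funext fun c' => congrArg g (Subsingleton.elim c' c))

lemma cubeMean_comp_equiv {κ : Type*} [Fintype κ] [DecidableEq κ] (e : ι ≃ κ)
    (g : (ι → Bool) → ℝ) : cubeMean a (fun c : κ → Bool => g (c ∘ e)) = cubeMean a g := by
  refine Fintype.sum_equiv (e.symm.arrowCongr (Equiv.refl Bool)) _ _ fun c => ?_
  congr 1
  exact (Fintype.prod_equiv e _ _ fun _ => rfl).symm

lemma cubeMean_exp_mul_sub (g : (ι → Bool) → ℝ) (l M : ℝ) :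
    cubeMean a (fun c => exp (l * (g c - M)))
      = exp (l * (cubeMean a g - M)) * cubeMean a (fun c => exp (l * (g c - cubeMean a g))) := by
  rw [← cubeMean_const_mul]
  congr 1
  funext c
  rw [← exp_add]
  ring_nf

theorem cubeMean_exp_le_of_abs_update_sub_le_fin :
    ∀ {m : ℕ} (g : (Fin m → Bool) → ℝ) (K : Fin m → ℝ),
      (∀ c q, |g (Function.update c q true) - g (Function.update c q false)| ≤ K q) → ∀ l : ℝ,
      cubeMean a (fun c => exp (l * (g c - cubeMean a g))) ≤ exp (l ^ 2 / 8 * ∑ q, K q ^ 2)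
  | 0, g, K, _, l => by
    have h : ∀ c, g c - cubeMean a g = 0 := fun c => by rw [cubeMean_eq_of_isEmpty g c, sub_self]
    simp [h, cubeMean_const]
  | m + 1, g, K, hg, l => by
    set E := exp (l ^ 2 / 8 * ∑ q : Fin m, K q.succ ^ 2)
    set M := cubeMean a g
    set m₀ := cubeMean a (fun c => g (Fin.cons false c))
    set m₁ := cubeMean a (fun c => g (Fin.cons true c))
    have hM : M = (1 - a) * m₀ + a * m₁ := cubeMean_fin_cons g
    have hhead : |m₁ - m₀| ≤ K 0 := by
      rw [← cubeMean_sub]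
      exact abs_cubeMean_le fun c => by
        simpa only [Fin.update_cons_zero] using hg (Fin.cons false c) 0
    have htail : ∀ b : Bool, cubeMean a (fun c => exp (l * (g (Fin.cons b c) - M)))
        ≤ exp (l * (cubeMean a (fun c => g (Fin.cons b c)) - M)) * E := fun b => by
      rw [cubeMean_exp_mul_sub]
      gcongr
      exact cubeMean_exp_le_of_abs_update_sub_le_fin _ (fun q => K q.succ)
        (fun c q => by simpa only [Fin.cons_update] using hg (Fin.cons b c) q.succ) l
    calc cubeMean a (fun c => exp (l * (g c - M)))
        = (1 - a) * cubeMean a (fun c => exp (l * (g (Fin.cons false c) - M)))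
          + a * cubeMean a (fun c => exp (l * (g (Fin.cons true c) - M))) := cubeMean_fin_cons _
      _ ≤ (1 - a) * (exp (l * (m₀ - M)) * E) + a * (exp (l * (m₁ - M)) * E) := by
          gcongr
          exacts [unitInterval.one_minus_nonneg a, htail false, unitInterval.nonneg a, htail true]
      _ = ((1 - a) * exp (l * (m₀ - M)) + a * exp (l * (m₁ - M))) * E := by ring
      _ ≤ exp (l ^ 2 / 8 * K 0 ^ 2) * E := by
          rw [hM]
          gcongr
          exact two_point_mgf_le a hhead l
      _ = exp (l ^ 2 / 8 * ∑ q, K q ^ 2) := by rw [Fin.sum_univ_succ, mul_add, exp_add]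

theorem cubeMean_exp_le_of_abs_update_sub_le (g : (ι → Bool) → ℝ) (K : ι → ℝ)
    (hg : ∀ c q, |g (Function.update c q true) - g (Function.update c q false)| ≤ K q) (l : ℝ) :
    cubeMean a (fun c => exp (l * (g c - cubeMean a g))) ≤ exp (l ^ 2 / 8 * ∑ q, K q ^ 2) := by
  set e := Fintype.equivFin ι
  have h := cubeMean_exp_le_of_abs_update_sub_le_fin (a := a) (fun c => g (c ∘ e))
    (fun j => K (e.symm j))
    (fun c j => by simpa only [Function.update_comp_equiv] using hg (c ∘ e) (e.symm j)) l
  rwa [cubeMean_comp_equiv e g, cubeMean_comp_equiv e (fun c => exp (l * (g c - cubeMean a g))),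
    e.symm.sum_comp (fun q => K q ^ 2)] at h
end BoolCube

lemma sum_mul_sum_sub_one_eq_sum_offDiag {κ : Type*} [DecidableEq κ] (s : Finset κ) (x : κ → ℝ)
    (hx : ∀ j ∈ s, x j * x j = x j) :
    (∑ j ∈ s, x j) * (∑ j ∈ s, x j - 1) = ∑ p ∈ s.offDiag, x p.1 * x p.2 := by
  rw [mul_sub, mul_one, Finset.sum_mul_sum, ← Finset.sum_product', ← Finset.diag_union_offDiag,
    Finset.sum_union (Finset.disjoint_diag_offDiag s), Finset.sum_diag, Finset.sum_congr rfl hx]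
  ring

section PairCount

variable {ι : Type*} {κ : ι → Type*} [DecidableEq ι] [∀ i, Fintype (κ i)] [∀ i, DecidableEq (κ i)]

def blockSum (x : (Σ i, κ i) → ℝ) (i : ι) : ℝ := ∑ j, x ⟨i, j⟩

lemma blockSum_update_of_ne (x : (Σ i, κ i) → ℝ) {i i₀ : ι} (j₀ : κ i₀) (v : ℝ) (h : i ≠ i₀) :
    blockSum (Function.update x ⟨i₀, j₀⟩ v) i = blockSum x i :=
  Finset.sum_congr rfl fun _ _ => Function.update_of_ne (fun hq => h (Sigma.mk.inj hq).1) _ _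

lemma blockSum_update_self (x : (Σ i, κ i) → ℝ) (i₀ : ι) (j₀ : κ i₀) (v : ℝ) :
    blockSum (Function.update x ⟨i₀, j₀⟩ v) i₀ = v + ∑ j ∈ Finset.univ \ {j₀}, x ⟨i₀, j⟩ := by
  have h := Function.update_comp_eq_of_injective x sigma_mk_injective j₀ v
  rw [blockSum, ← Finset.sum_update_of_mem (Finset.mem_univ j₀)]
  exact Finset.sum_congr rfl fun j _ => congrFun h j

variable [Fintype ι]

def pairCount (x : (Σ i, κ i) → ℝ) : ℝ := ∑ i, blockSum x i * (blockSum x i - 1)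

lemma pairCount_update_one_sub_update_zero (x : (Σ i, κ i) → ℝ) (i₀ : ι) (j₀ : κ i₀) :
    pairCount (Function.update x ⟨i₀, j₀⟩ 1) - pairCount (Function.update x ⟨i₀, j₀⟩ 0)
      = 2 * ∑ j ∈ Finset.univ \ {j₀}, x ⟨i₀, j⟩ := by
  rw [pairCount, pairCount, ← Finset.sum_sub_distrib, Finset.sum_eq_single i₀
    (fun i _ hi => by simp only [blockSum_update_of_ne x j₀ _ hi, sub_self])
    (fun h => absurd (Finset.mem_univ i₀) h), blockSum_update_self, blockSum_update_self]
  ring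

lemma abs_pairCount_update_sub_le (c : (Σ i, κ i) → Bool) (q : Σ i, κ i) :
    |pairCount (fun r => if Function.update c q true r then 1 else 0)
      - pairCount (fun r => if Function.update c q false r then 1 else 0)|
      ≤ 2 * (Fintype.card (κ q.1) + 1) := by
  obtain ⟨i₀, j₀⟩ := q
  have hupdate : ∀ b : Bool, (fun r => if Function.update c ⟨i₀, j₀⟩ b r then (1 : ℝ) else 0)
      = Function.update (fun r => if c r then 1 else 0) ⟨i₀, j₀⟩ (if b then 1 else 0) := by
    intro b
    funext r
    by_cases hr : r = ⟨i₀, j₀⟩ <;> simp [hr]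
  rw [hupdate, hupdate, if_pos rfl, if_neg Bool.false_ne_true, pairCount_update_one_sub_update_zero]
  have hnonneg : 0 ≤ ∑ j ∈ Finset.univ \ {j₀}, if c ⟨i₀, j⟩ then (1 : ℝ) else 0 :=
    Finset.sum_nonneg fun j _ => by split <;> norm_num
  have hle : ∑ j ∈ Finset.univ \ {j₀}, (if c ⟨i₀, j⟩ then (1 : ℝ) else 0) ≤ Fintype.card (κ i₀) :=
    calc _ ≤ (Finset.univ \ {j₀}).card • (1 : ℝ) :=
          Finset.sum_le_card_nsmul _ _ _ fun j _ => by split <;> norm_num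
      _ ≤ Fintype.card (κ i₀) := by rw [nsmul_one]; exact_mod_cast Finset.card_le_univ _
  rw [abs_of_nonneg (by positivity)]
  linarith

lemma cubeMean_pairCount (a : unitInterval) :
    cubeMean a (fun c => pairCount (fun q : Σ i, κ i => if c q then 1 else 0))
      = (a : ℝ) ^ 2 * ∑ i, (Fintype.card (κ i) : ℝ) * (Fintype.card (κ i) - 1) := by
  have hpair : ∀ q q' : Σ i, κ i, q ≠ q' →
      cubeMean a (fun c => (if c q then (1 : ℝ) else 0) * (if c q' then 1 else 0))
        = (a : ℝ) ^ 2 := by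
    intro q q' hne
    simpa [Finset.prod_pair hne, Finset.card_pair hne] using
      cubeMean_prod_indicator (a := a) {q, q'}
  have hblock : ∀ c : (Σ i, κ i) → Bool, pairCount (fun q => if c q then 1 else 0)
      = ∑ i, ∑ p ∈ (Finset.univ : Finset (κ i)).offDiag,
          (if c ⟨i, p.1⟩ then (1 : ℝ) else 0) * (if c ⟨i, p.2⟩ then 1 else 0) := by
    intro c
    refine Finset.sum_congr rfl fun i _ => sum_mul_sum_sub_one_eq_sum_offDiag _ _ fun j _ => ?_
    dsimp only
    split <;> norm_num
  simp only [hblock, cubeMean_sum, Finset.mul_sum]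
  refine Finset.sum_congr rfl fun i _ => ?_
  rw [Finset.sum_congr rfl fun p hp => hpair _ _ fun h => (Finset.mem_offDiag.1 hp).2.2
    (eq_of_heq (Sigma.mk.inj h).2), Finset.sum_const, Finset.offDiag_card, nsmul_eq_mul,
    Nat.cast_sub (Nat.le_mul_self _), Finset.card_univ]
  push_cast
  ring

end PairCount

lemma measurable_decide_eq_one : Measurable fun x : ℝ => decide (x = 1) :=
  measurable_to_countable' fun b => by
    cases b
    · have hset : (fun x : ℝ => decide (x = 1)) ⁻¹' {false} = {1}ᶜ := by ext; simp
      exact hset ▸ (measurableSet_singleton 1).compl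
    · have hset : (fun x : ℝ => decide (x = 1)) ⁻¹' {true} = {1} := by ext; simp
      exact hset ▸ measurableSet_singleton 1

section OnePattern

variable {Ω : Type*} {ι : Type*} {I : ι → Ω → ℝ}

noncomputable def onePattern (I : ι → Ω → ℝ) (ω : Ω) : ι → Bool := fun q => decide (I q ω = 1)

lemma ite_onePattern_eq (hvals : ∀ q ω, I q ω = 0 ∨ I q ω = 1) (q : ι) (ω : Ω) :
    (if onePattern I ω q then 1 else 0) = I q ω := by
  rcases hvals q ω with h | h <;> simp [onePattern, h]

variable [MeasurableSpace Ω]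

lemma measurable_onePattern (hmeas : ∀ q, Measurable (I q)) : Measurable (onePattern I) :=
  measurable_pi_lambda _ fun q => measurable_decide_eq_one.comp (hmeas q)

variable {μ : Measure Ω} [IsProbabilityMeasure μ] [Fintype ι] {a : unitInterval}

lemma integrable_comp_onePattern (hmeas : ∀ q, Measurable (I q)) (g : (ι → Bool) → ℝ) :
    Integrable (fun ω => g (onePattern I ω)) μ :=
  (integrable_map_measure (Measurable.of_discrete.aestronglyMeasurable)
    (measurable_onePattern hmeas).aemeasurable).1 .of_finite

lemma measure_onePattern_preimage_singleton (hmeas : ∀ q, Measurable (I q))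
    (hber : ∀ q, μ {ω | I q ω = 1} = ENNReal.ofReal a) (hindep : iIndepFun I μ) (c : ι → Bool) :
    μ (onePattern I ⁻¹' {c}) = ENNReal.ofReal (cubeWeight a c) := by
  have hindep' : iIndepFun (fun q ω => onePattern I ω q) μ :=
    hindep.comp (fun _ x => decide (x = 1)) fun _ => measurable_decide_eq_one
  have hcoord : ∀ q, μ ((fun ω => onePattern I ω q) ⁻¹' {c q})
      = ENNReal.ofReal (if c q then (a : ℝ) else 1 - a) := by
    intro q
    have hone : MeasurableSet {ω | I q ω = 1} := hmeas q (measurableSet_singleton 1)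
    cases c q
    · have hset : (fun ω => onePattern I ω q) ⁻¹' {false} = {ω | I q ω = 1}ᶜ := by
        ext ω; simp [onePattern]
      rw [hset, prob_compl_eq_one_sub hone, hber q,
        if_neg Bool.false_ne_true, ENNReal.ofReal_sub _ (unitInterval.nonneg a), ENNReal.ofReal_one]
    · have hset : (fun ω => onePattern I ω q) ⁻¹' {true} = {ω | I q ω = 1} := by
        ext ω; simp [onePattern]
      rw [hset, hber q, if_pos rfl]
  have hpre : onePattern I ⁻¹' {c} = ⋂ q ∈ Finset.univ, (fun ω => onePattern I ω q) ⁻¹' {c q} := by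
    ext ω
    simp [funext_iff]
  rw [hpre, hindep'.measure_inter_preimage_eq_mul _ fun q _ => measurableSet_singleton _,
    cubeWeight, ENNReal.ofReal_prod_of_nonneg]
  · exact Finset.prod_congr rfl fun q _ => hcoord q
  · exact fun q _ => by split; exacts [unitInterval.nonneg a, unitInterval.one_minus_nonneg a]

variable [DecidableEq ι]

lemma integral_comp_onePattern (hmeas : ∀ q, Measurable (I q))
    (hber : ∀ q, μ {ω | I q ω = 1} = ENNReal.ofReal a) (hindep : iIndepFun I μ)
    (g : (ι → Bool) → ℝ) :
    ∫ ω, g (onePattern I ω) ∂μ = cubeMean a g := by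
  rw [← integral_map (measurable_onePattern hmeas).aemeasurable
    Measurable.of_discrete.aestronglyMeasurable, integral_fintype .of_finite]
  refine Finset.sum_congr rfl fun c _ => ?_
  rw [measureReal_def, Measure.map_apply (measurable_onePattern hmeas) (measurableSet_singleton c),
    measure_onePattern_preimage_singleton hmeas hber hindep, ENNReal.toReal_ofReal
    (cubeWeight_nonneg a c), smul_eq_mul]

end OnePattern

section SubgaussianTail

variable {Ω : Type*} [MeasurableSpace Ω] {μ : Measure Ω} [IsProbabilityMeasure μ]

lemma ProbabilityTheory.HasSubgaussianMGF.measureReal_abs_ge_le {X : Ω → ℝ} {c : ℝ≥0}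
    (h : HasSubgaussianMGF X c μ) {ε : ℝ} (hε : 0 ≤ ε) :
    μ.real {ω | ε ≤ |X ω|} ≤ 2 * exp (-ε ^ 2 / (2 * c)) :=
  calc μ.real {ω | ε ≤ |X ω|} ≤ μ.real ({ω | ε ≤ X ω} ∪ {ω | ε ≤ (-X) ω}) :=
        measureReal_mono fun _ (hω : ε ≤ |_|) => le_abs.1 hω
    _ ≤ μ.real {ω | ε ≤ X ω} + μ.real {ω | ε ≤ (-X) ω} := measureReal_union_le _ _
    _ ≤ exp (-ε ^ 2 / (2 * c)) + exp (-ε ^ 2 / (2 * c)) :=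
        add_le_add (h.measure_ge_le hε) (h.neg.measure_ge_le hε)
    _ = 2 * exp (-ε ^ 2 / (2 * c)) := by ring

variable {ι : Type*} [Fintype ι] [DecidableEq ι] {I : ι → Ω → ℝ} {a : unitInterval}

lemma hasSubgaussianMGF_comp_onePattern (hmeas : ∀ q, Measurable (I q))
    (hber : ∀ q, μ {ω | I q ω = 1} = ENNReal.ofReal a) (hindep : iIndepFun I μ)
    (g : (ι → Bool) → ℝ) (K : ι → ℝ)
    (hg : ∀ c q, |g (Function.update c q true) - g (Function.update c q false)| ≤ K q) :
    HasSubgaussianMGF (fun ω => g (onePattern I ω) - cubeMean a g)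
      (∑ q, K q ^ 2 / 4).toNNReal μ where
  integrable_exp_mul t :=
    integrable_comp_onePattern hmeas fun c => exp (t * (g c - cubeMean a g))
  mgf_le t := by
    rw [mgf, integral_comp_onePattern hmeas hber hindep fun c => exp (t * (g c - cubeMean a g)),
      Real.coe_toNNReal _ (by positivity)]
    refine (cubeMean_exp_le_of_abs_update_sub_le g K hg t).trans_eq ?_
    rw [← Finset.sum_div]
    ring_nf

end SubgaussianTail

lemma hasSubgaussianMGF_pairCount_onePattern {Ω : Type*} [MeasurableSpace Ω] {μ : Measure Ω}
    [IsProbabilityMeasure μ] {ι : Type*} {κ : ι → Type*} [Fintype ι] [DecidableEq ι]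
    [∀ i, Fintype (κ i)] [∀ i, DecidableEq (κ i)] {I : (Σ i, κ i) → Ω → ℝ} {a : unitInterval}
    (hmeas : ∀ q, Measurable (I q))
    (hber : ∀ q, μ {ω | I q ω = 1} = ENNReal.ofReal a) (hindep : iIndepFun I μ) :
    HasSubgaussianMGF (fun ω => pairCount (fun q => if onePattern I ω q then 1 else 0)
        - cubeMean a fun c : (Σ i, κ i) → Bool => pairCount fun q => if c q then 1 else 0)
      (∑ i, (Fintype.card (κ i) : ℝ) * (Fintype.card (κ i) + 1) ^ 2).toNNReal μ := by
  have hvar : ∑ q : Σ i, κ i, (2 * ((Fintype.card (κ q.1) : ℝ) + 1)) ^ 2 / 4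
      = ∑ i, (Fintype.card (κ i) : ℝ) * (Fintype.card (κ i) + 1) ^ 2 := by
    rw [Fintype.sum_sigma]
    refine Finset.sum_congr rfl fun i _ => ?_
    -- the `Fintype` instance in the summand still mentions `⟨i, j⟩.1`
    change ∑ _j : κ i, (2 * ((Fintype.card (κ i) : ℝ) + 1)) ^ 2 / 4 = _
    rw [Finset.sum_const, Finset.card_univ, nsmul_eq_mul]
    ring
  rw [← hvar]
  exact hasSubgaussianMGF_comp_onePattern hmeas hber hindep
    (fun c => pairCount fun q => if c q then 1 else 0) (fun q => 2 * (Fintype.card (κ q.1) + 1))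
    abs_pairCount_update_sub_le

theorem percolated_degree_concentration_general
    {Ω : Type*} [MeasurableSpace Ω] (μ : Measure Ω) [IsProbabilityMeasure μ]
    (n : ℕ) (d : Fin n → ℕ) (p : ℝ) (hp : p ∈ Set.Icc (0 : ℝ) 1)
    (I : (Σ i : Fin n, Fin (d i)) → Ω → ℝ)
    (hmeas : ∀ q, Measurable (I q))
    (hvals : ∀ q, ∀ ω, I q ω = 0 ∨ I q ω = 1)
    (hber : ∀ q, μ {ω | I q ω = 1} = ENNReal.ofReal (Real.sqrt p))
    (hindep : iIndepFun I μ) :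
    (∫ ω, (∑ i : Fin n,
        (∑ j : Fin (d i), I ⟨i, j⟩ ω) * ((∑ j : Fin (d i), I ⟨i, j⟩ ω) - 1)) ∂μ)
      = p * ∑ i : Fin n, (d i : ℝ) * ((d i : ℝ) - 1) ∧
    ∀ t : ℝ, 0 < t →
      μ {ω | |(∑ i : Fin n,
            (∑ j : Fin (d i), I ⟨i, j⟩ ω) * ((∑ j : Fin (d i), I ⟨i, j⟩ ω) - 1))
          - p * ∑ i : Fin n, (d i : ℝ) * ((d i : ℝ) - 1)| > t}
        ≤ ENNReal.ofReal (2 * Real.exp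
            (-(t ^ 2) / (2 * ∑ i : Fin n, (d i : ℝ) * ((d i : ℝ) + 1) ^ 2))) := by
  set a : unitInterval := ⟨√p, Real.sqrt_nonneg p, Real.sqrt_le_one.2 hp.2⟩
  set F : ((Σ i : Fin n, Fin (d i)) → Bool) → ℝ := fun c => pairCount fun q => if c q then 1 else 0
  have hf : ∀ ω, (∑ i : Fin n, (∑ j : Fin (d i), I ⟨i, j⟩ ω) * ((∑ j : Fin (d i), I ⟨i, j⟩ ω) - 1))
      = F (onePattern I ω) := fun ω => by
    simp only [F, ite_onePattern_eq hvals]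
    rfl
  have hmean : cubeMean a F = p * ∑ i, (d i : ℝ) * ((d i : ℝ) - 1) := by
    rw [cubeMean_pairCount]
    simp [a, Real.sq_sqrt hp.1]
  have hsub := hasSubgaussianMGF_pairCount_onePattern (a := a) hmeas hber hindep
  simp only [Fintype.card_fin] at hsub
  refine ⟨by simp_rw [hf]; rw [integral_comp_onePattern (a := a) hmeas hber hindep, hmean],
    fun t ht => ?_⟩
  calc _ ≤ μ {ω | t ≤ |F (onePattern I ω) - cubeMean a F|} :=
        measure_mono fun ω hω => by rw [Set.mem_ofPred_eq, hf, ← hmean] at hω; exact hω.le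
    _ = ENNReal.ofReal (μ.real {ω | t ≤ |F (onePattern I ω) - cubeMean a F|}) :=
        (ofReal_measureReal).symm
    _ ≤ _ := by
        refine ENNReal.ofReal_le_ofReal ((hsub.measureReal_abs_ge_le ht.le).trans_eq ?_)
        rw [Real.coe_toNNReal _ (by positivity), neg_div]

/-- **Concentration of the percolated second factorial moment (inequality (9.2)).**
Let `d_1, …, d_n` be nonnegative integers, `p ∈ [0,1]`, and let `(I_{ij})_{i∈[n], j∈[d_i]}`
be independent Bernoulli(`√p`) random variables. With `d̃_i = ∑_{j=1}^{d_i} I_{ij}` and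
`f = ∑_{i=1}^n d̃_i(d̃_i − 1)`, one has `E[f] = p ∑_i d_i(d_i − 1)` and, for every `t > 0`,
`P(|f − p ∑_i d_i(d_i−1)| > t) ≤ 2 exp(−t² / (2 ∑_i d_i (d_i+1)²))`. -/
theorem percolated_degree_concentration
    {Ω : Type*} [MeasurableSpace Ω] (μ : Measure Ω) [IsProbabilityMeasure μ]
    (n : ℕ) (hn : 0 < n) (d : Fin n → ℕ) (p : ℝ) (hp : p ∈ Set.Icc (0 : ℝ) 1)
    (I : (Σ i : Fin n, Fin (d i)) → Ω → ℝ)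
    (hmeas : ∀ q, Measurable (I q))
    (hvals : ∀ q, ∀ ω, I q ω = 0 ∨ I q ω = 1)
    (hber : ∀ q, μ {ω | I q ω = 1} = ENNReal.ofReal (Real.sqrt p))
    (hindep : iIndepFun I μ) :
    (∫ ω, (∑ i : Fin n,
        (∑ j : Fin (d i), I ⟨i, j⟩ ω) * ((∑ j : Fin (d i), I ⟨i, j⟩ ω) - 1)) ∂μ)
      = p * ∑ i : Fin n, (d i : ℝ) * ((d i : ℝ) - 1) ∧
    ∀ t : ℝ, 0 < t →
      μ {ω | |(∑ i : Fin n,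
            (∑ j : Fin (d i), I ⟨i, j⟩ ω) * ((∑ j : Fin (d i), I ⟨i, j⟩ ω) - 1))
          - p * ∑ i : Fin n, (d i : ℝ) * ((d i : ℝ) - 1)| > t}
        ≤ ENNReal.ofReal (2 * Real.exp
            (-(t ^ 2) / (2 * ∑ i : Fin n, (d i : ℝ) * ((d i : ℝ) + 1) ^ 2))) :=
  percolated_degree_concentration_general μ n d p hp I hmeas hvals hber hindep
end
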